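/- Define d₂₂(r) = 4 − 3r for 0 ≤ r ≤ 1, and for a ∈ (0,1] define d_IA(a,r) = min( min(2/(a+3), 1/(4a))·(6 − 3r − 2a), min(4/(a+3), 1/(4a))·(6 − 6r + 2a), d₂₂(r) ). Then for every r with 0 ≤ r ≤ 4/5, the supremum of d_IA(a,r) over a ∈ (0,1] equals 4 − 3r (approached as a → 0⁺). -/
import Mathlib


noncomputable def d22 (r : ℝ) : ℝ := 4 - 3 * r

noncomputable def dIA (a r : ℝ) : ℝ :=
  min (min (2 / (a + 3)) (1 / (4 * a)) * (6 - 3 * r - 2 * a))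
    (min (min (4 / (a + 3)) (1 / (4 * a)) * (6 - 6 * r + 2 * a)) (d22 r))

lemma dIA_le (a r : ℝ) : dIA a r ≤ 4 - 3 * r := by
  unfold dIA d22
  exact le_trans (min_le_right _ _) (min_le_right _ _)

lemma dIA_lower (r ε : ℝ) (hr0 : 0 ≤ r) (hr1 : r ≤ 4 / 5) (hε : 0 < ε) :
    4 - 3 * r - ε ≤ dIA (min (ε / 3) (1 / 5)) r := by
  set a : ℝ := min (ε / 3) (1 / 5) with ha
  have ha0 : 0 < a := lt_min (by linarith) (by norm_num)
  have ha5 : a ≤ 1 / 5 := min_le_right _ _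
  have haε : a ≤ ε / 3 := min_le_left _ _
  have h3 : (0:ℝ) < a + 3 := by linarith
  have h4a : (0:ℝ) < 4 * a := by linarith
  have hm1 : min (2 / (a + 3)) (1 / (4 * a)) = 2 / (a + 3) := by
    apply min_eq_left
    rw [div_le_div_iff₀ h3 h4a]
    nlinarith
  have hm2 : min (4 / (a + 3)) (1 / (4 * a)) = 4 / (a + 3) := by
    apply min_eq_left
    rw [div_le_div_iff₀ h3 h4a]
    nlinarith
  unfold dIA d22
  rw [hm1, hm2]
  refine le_min ?_ (le_min ?_ (by linarith))
  · rw [div_mul_eq_mul_div, le_div_iff₀ h3]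
    nlinarith [ha0.le, haε]
  · rw [div_mul_eq_mul_div, le_div_iff₀ h3]
    nlinarith [ha0.le]

theorem stmt_18 (r : ℝ) (hr0 : 0 ≤ r) (hr1 : r ≤ 4 / 5) :
    sSup {v : ℝ | ∃ a : ℝ, 0 < a ∧ a ≤ 1 ∧ v = dIA a r} = 4 - 3 * r := by
  set S := {v : ℝ | ∃ a : ℝ, 0 < a ∧ a ≤ 1 ∧ v = dIA a r} with hS
  have hbdd : BddAbove S := ⟨4 - 3 * r, by
    rintro v ⟨a, _, _, rfl⟩; exact dIA_le a r⟩
  have hne : S.Nonempty := ⟨dIA 1 r, 1, one_pos, le_refl 1, rfl⟩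
  apply le_antisymm
  · exact csSup_le hne (by rintro v ⟨a, _, _, rfl⟩; exact dIA_le a r)
  · apply le_of_forall_sub_le
    intro ε hε
    have hmem : dIA (min (ε / 3) (1 / 5)) r ∈ S :=
      ⟨min (ε / 3) (1 / 5), lt_min (by linarith) (by norm_num),
        le_trans (min_le_right _ _) (by norm_num), rfl⟩
    exact le_trans (dIA_lower r ε hr0 hr1 hε) (le_csSup hbdd hmem)
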